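/- arXiv:1108.0307 — 4 statements merged into one kernel-verified Lean document; each statement's English description precedes it below -/
import Mathlib

section
/- For every continuous function u : [0,∞) → [0,∞) with u(0) > 0, the hitting times τ_ε(u) converge to τ_0(u) in the metric space ([0,∞], ρ) as ε ↓ 0; equivalently, arctan(τ_ε(u)) → arctan(τ_0(u)) as ε ↓ 0. -/
open Filter Topology Set ENNReal

/-- The hitting time of level `l` by a path `u : [0,∞) → ℝ`, an element of `[0,∞]`,
with `inf ∅ = ∞`. -/
noncomputable def hitTime (u : ℝ → ℝ) (l : ℝ) : ℝ≥0∞ :=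
  sInf (ENNReal.ofReal '' {t : ℝ | 0 ≤ t ∧ u t = l})

/-- `arctan` extended to `[0,∞]` with `arctan ∞ = π/2`. -/
noncomputable def atanE (s : ℝ≥0∞) : ℝ :=
  if s = ∞ then Real.pi / 2 else Real.arctan s.toReal

/-- The metric `ρ(s,t) = |arctan s − arctan t|` on `[0,∞]`. -/
noncomputable def rhoE (s t : ℝ≥0∞) : ℝ := |atanE s - atanE t|

lemma tendsto_atanE (x : ℝ≥0∞) : Tendsto atanE (𝓝 x) (𝓝 (atanE x)) := by
  rcases eq_or_ne x ∞ with rfl | hx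
  · have hx2 : atanE ∞ = Real.pi / 2 := if_pos rfl
    rw [hx2, Metric.tendsto_nhds]
    intro ε hε
    have harc : ∀ᶠ r in atTop, dist (Real.arctan r) (Real.pi / 2) < ε := by
      have := Real.tendsto_arctan_atTop.mono_right nhdsWithin_le_nhds
      exact (Metric.tendsto_nhds.mp this) ε hε
    obtain ⟨R, hR⟩ := harc.exists_forall_of_atTop
    have hmem : Ioi (ENNReal.ofReal (max R 0)) ∈ 𝓝 (∞ : ℝ≥0∞) :=
      Ioi_mem_nhds ENNReal.ofReal_lt_top
    filter_upwards [hmem] with s hs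
    rcases eq_or_ne s ∞ with rfl | hs'
    · simpa [hx2] using hε
    · have : ENNReal.ofReal (max R 0) < ENNReal.ofReal s.toReal := by
        rwa [ENNReal.ofReal_toReal hs']
      have hRs : max R 0 < s.toReal := by
        have := (ENNReal.ofReal_lt_ofReal_iff_of_nonneg (le_max_right R 0)).mp this
        exact this
      have : dist (Real.arctan s.toReal) (Real.pi / 2) < ε :=
        hR s.toReal (le_of_lt (lt_of_le_of_lt (le_max_left R 0) hRs))
      simpa [atanE, hs'] using this
  · have h1 : Tendsto ENNReal.toReal (𝓝 x) (𝓝 x.toReal) := ENNReal.tendsto_toReal hx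
    have h2 := (Real.continuous_arctan.continuousAt (x := x.toReal)).tendsto.comp h1
    have hx2 : atanE x = Real.arctan x.toReal := if_neg hx
    rw [hx2]
    refine h2.congr' ?_
    filter_upwards [Iio_mem_nhds hx.lt_top] with s hs
    simp [atanE, (LT.lt.ne hs : s ≠ ∞), Function.comp]

/-- For every continuous `u : [0,∞) → [0,∞)` with `u 0 > 0`, the hitting times
`τ_ε(u)` converge to `τ_0(u)` in `([0,∞], ρ)` as `ε ↓ 0`. -/
theorem stmt1 (u : ℝ → ℝ) (hu : ContinuousOn u (Ici 0))
    (hnonneg : ∀ t, 0 ≤ t → 0 ≤ u t) (h0 : 0 < u 0) :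
    Tendsto (fun ε : ℝ => rhoE (hitTime u ε) (hitTime u 0)) (𝓝[>] (0 : ℝ)) (𝓝 0) := by
  set T := hitTime u 0 with hT
  have key : Tendsto (fun ε : ℝ => hitTime u ε) (𝓝[>] (0 : ℝ)) (𝓝 T) := by
    rw [tendsto_order]
    constructor
    · intro a ha
      obtain ⟨b, hab, hbT⟩ := exists_between ha
      have hbtop : b ≠ ∞ := by
        intro h; rw [h] at hbT; exact not_top_lt hbT
      set M := b.toReal with hM
      have hM0 : (0 : ℝ) ≤ M := ENNReal.toReal_nonneg
      have hpos : ∀ t ∈ Icc (0 : ℝ) M, 0 < u t := by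
        intro t ht
        rcases (hnonneg t ht.1).lt_or_eq with h | h
        · exact h
        · exfalso
          have h1 : T ≤ ENNReal.ofReal t := sInf_le ⟨t, ⟨ht.1, h.symm⟩, rfl⟩
          have h2 : T ≤ b := by
            refine h1.trans ?_
            rw [← ENNReal.ofReal_toReal hbtop]
            exact ENNReal.ofReal_le_ofReal ht.2
          exact absurd (hbT.trans_le h2) (lt_irrefl b)
      obtain ⟨tm, htm, hmin⟩ := isCompact_Icc.exists_isMinOn
        ⟨0, left_mem_Icc.2 hM0⟩ (hu.mono (fun x hx => hx.1))
      have hm : 0 < u tm := hpos tm htm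
      filter_upwards [Ioo_mem_nhdsGT_of_mem ⟨le_refl (0 : ℝ), hm⟩] with ε hε
      refine lt_of_lt_of_le hab (le_sInf ?_)
      rintro x ⟨t, ⟨ht0, htε⟩, rfl⟩
      rw [← ENNReal.ofReal_toReal hbtop]
      apply ENNReal.ofReal_le_ofReal
      by_contra h
      push_neg at h
      have hge : u tm ≤ u t := hmin ⟨ht0, h.le⟩
      rw [htε] at hge
      exact absurd hε.2 (not_lt.2 hge)
    · intro a ha
      obtain ⟨x, hx, hxa⟩ := sInf_lt_iff.mp ha
      obtain ⟨t, ⟨ht0, htz⟩, rfl⟩ := hx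
      filter_upwards [Ioo_mem_nhdsGT_of_mem ⟨le_refl (0 : ℝ), h0⟩] with ε hε
      have hεmem : ε ∈ Icc (u t) (u 0) := ⟨htz ▸ hε.1.le, hε.2.le⟩
      obtain ⟨s, hs, hsε⟩ := intermediate_value_Icc' ht0
        (hu.mono (fun x hx => hx.1)) hεmem
      calc hitTime u ε ≤ ENNReal.ofReal s := sInf_le ⟨s, ⟨hs.1, hsε⟩, rfl⟩
        _ ≤ ENNReal.ofReal t := ENNReal.ofReal_le_ofReal hs.2
        _ < a := hxa
  have h3 := (tendsto_atanE T).comp key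
  have h4 : Tendsto (fun ε : ℝ => atanE (hitTime u ε) - atanE T) (𝓝[>] (0 : ℝ)) (𝓝 0) := by
    simpa using h3.sub_const (atanE T)
  have h5 := h4.abs
  simpa [rhoE] using h5
end

section
/- Let (ξ_j)_{j≥0} be an i.i.d. sequence of standard Gaussian N(0,1) random variables. For every α > 0 and q > 0 there exists a finite constant C, depending only on α and q, such that for every ℕ-valued random variable N defined on the same probability space and every k ∈ ℕ, E|ξ_{N∧k}|^q ≤ E[(N∧k)^α] + C. -/
/-!
Whatever `N` is, `|ξ_{N∧k}|^q ≤ (N∧k)^α + ∑_{i ≤ k} (|ξ_i|^q - i^α)⁺` pointwise, so it suffices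
to bound the expected excesses `E (|ξ_i|^q - i^α)⁺` by a summable sequence. Since
`(a - b)⁺ ≤ a (a / b)^{2/α}`, the `i`-th one is at most `E |ξ|^{q (1 + 2/α)} / i²`, and Gaussian
moments are finite.
-/

open MeasureTheory ProbabilityTheory

lemma max_sub_zero_le_rpow_div {a b p : ℝ} (ha : 0 ≤ a) (hb : 0 < b) (hp : 0 ≤ p) :
    max (a - b) 0 ≤ a ^ (1 + p) / b ^ p := by
  rcases le_or_gt a b with hab | hab
  · rw [max_eq_right (by linarith)]
    positivity
  · have hratio : 1 ≤ (a / b) ^ p := Real.one_le_rpow ((one_le_div hb).2 hab.le) hp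
    calc max (a - b) 0 ≤ a * 1 := by rw [max_eq_left (by linarith)]; linarith
      _ ≤ a * (a / b) ^ p := by gcongr
      _ = a ^ (1 + p) / b ^ p := by
        rw [Real.div_rpow ha hb.le, Real.rpow_add' ha (by positivity), Real.rpow_one, mul_div_assoc]

lemma max_sub_natCast_rpow_le {α : ℝ} (hα : 0 < α) {a : ℝ} (ha : 0 ≤ a) {i : ℕ} (hi : i ≠ 0) :
    max (a - (i : ℝ) ^ α) 0 ≤ a ^ (1 + 2 / α) / (i : ℝ) ^ 2 := by
  have hi' : (0 : ℝ) < i := by positivity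
  calc max (a - (i : ℝ) ^ α) 0 ≤ a ^ (1 + 2 / α) / ((i : ℝ) ^ α) ^ (2 / α) :=
        max_sub_zero_le_rpow_div ha (by positivity) (by positivity)
    _ = a ^ (1 + 2 / α) / (i : ℝ) ^ 2 := by
        rw [← Real.rpow_mul hi'.le, mul_div_cancel₀ _ hα.ne', Real.rpow_two]

lemma summable_integral_max_sub_natCast_rpow {E : Type*} [MeasurableSpace E] (μ : Measure E)
    {f : E → ℝ} (hf : 0 ≤ f) {α : ℝ} (hα : 0 < α)
    (hint : Integrable (fun x => f x ^ (1 + 2 / α)) μ) :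
    Summable fun i : ℕ => ∫ x, max (f x - (i : ℝ) ^ α) 0 ∂μ := by
  rw [← summable_nat_add_iff 1]
  refine Summable.of_nonneg_of_le (fun i => integral_nonneg fun x => le_max_right _ _)
    (fun i => integral_mono_of_nonneg (ae_of_all _ fun x => le_max_right _ _)
      (hint.div_const _) (ae_of_all _ fun x => max_sub_natCast_rpow_le hα (hf x) i.succ_ne_zero)) ?_
  simp_rw [integral_div]
  exact (((summable_nat_add_iff 1).2 (Real.summable_one_div_nat_pow.2 one_lt_two)).mul_left _).congr
    fun i => by ring

lemma integrable_abs_rpow_gaussianReal {t : ℝ} (ht : 0 ≤ t) :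
    Integrable (fun x => |x| ^ t) (gaussianReal 0 1) := by
  simpa [ht] using (memLp_id_gaussianReal (μ := 0) (v := 1) t.toNNReal).integrable_norm_rpow'

lemma le_add_sum_max_sub (f g : ℕ → ℝ) {s : Finset ℕ} {n : ℕ} (hn : n ∈ s) :
    f n ≤ g n + ∑ i ∈ s, max (f i - g i) 0 :=
  calc f n ≤ g n + max (f n - g n) 0 := by linarith [le_max_left (f n - g n) (0 : ℝ)]
    _ ≤ g n + ∑ i ∈ s, max (f i - g i) 0 := by
      gcongr
      exact Finset.single_le_sum (f := fun i => max (f i - g i) 0) (fun i _ => le_max_right _ _) hn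

section

variable {Ω : Type*} [MeasurableSpace Ω] {P : Measure Ω} [IsFiniteMeasure P]

lemma integrable_natCast_min_rpow {N : Ω → ℕ} (hN : Measurable N) (k : ℕ) {α : ℝ} (hα : 0 ≤ α) :
    Integrable (fun ω => ((min (N ω) k : ℕ) : ℝ) ^ α) P := by
  have hmeas : Measurable fun ω => ((min (N ω) k : ℕ) : ℝ) ^ α :=
    (measurable_of_countable fun n : ℕ => (n : ℝ) ^ α).comp (hN.min measurable_const)
  refine (integrable_const ((k : ℝ) ^ α)).mono' hmeas.aestronglyMeasurable
    (ae_of_all _ fun ω => ?_)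
  rw [Real.norm_of_nonneg (by positivity)]
  gcongr
  exact_mod_cast min_le_right _ _

lemma integral_abs_rpow_comp_min_le {μ : Measure ℝ} [IsFiniteMeasure μ] {ξ : ℕ → Ω → ℝ}
    (hmeas : ∀ j, Measurable (ξ j)) (hlaw : ∀ j, P.map (ξ j) = μ) {α q : ℝ} (hα : 0 ≤ α)
    (hint : Integrable (fun x => |x| ^ q) μ)
    (hsum : Summable fun i : ℕ => ∫ x, max (|x| ^ q - (i : ℝ) ^ α) 0 ∂μ)
    {N : Ω → ℕ} (hN : Measurable N) (k : ℕ) :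
    ∫ ω, |ξ (min (N ω) k) ω| ^ q ∂P ≤
      (∫ ω, ((min (N ω) k : ℕ) : ℝ) ^ α ∂P) + ∑' i : ℕ, ∫ x, max (|x| ^ q - (i : ℝ) ^ α) 0 ∂μ := by
  set excess : ℕ → ℝ → ℝ := fun i x => max (|x| ^ q - (i : ℝ) ^ α) 0
  have hexcess_meas : ∀ i, Measurable (excess i) := fun i => by fun_prop
  have hexcess_int : ∀ i, Integrable (fun ω => excess i (ξ i ω)) P := fun i =>
    (integrable_map_measure (hexcess_meas i).aestronglyMeasurable (hmeas i).aemeasurable).1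
      (hlaw i ▸ (hint.sub (integrable_const _)).sup (integrable_zero _ _ _))
  have hexcess_integral : ∀ i, ∫ ω, excess i (ξ i ω) ∂P = ∫ x, excess i x ∂μ := fun i => by
    rw [← hlaw i, integral_map (hmeas i).aemeasurable (hexcess_meas i).aestronglyMeasurable]
  have hmin_int := integrable_natCast_min_rpow (P := P) hN k hα
  calc ∫ ω, |ξ (min (N ω) k) ω| ^ q ∂P
      ≤ ∫ ω, (((min (N ω) k : ℕ) : ℝ) ^ α + ∑ i ∈ Finset.range (k + 1), excess i (ξ i ω)) ∂P :=
        integral_mono_of_nonneg (ae_of_all _ fun ω => by positivity)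
          (hmin_int.add (integrable_finsetSum _ fun i _ => hexcess_int i))
          (ae_of_all _ fun ω => le_add_sum_max_sub (fun i => |ξ i ω| ^ q) (fun i => (i : ℝ) ^ α)
            (Finset.mem_range_succ_iff.2 (min_le_right _ _)))
    _ = (∫ ω, ((min (N ω) k : ℕ) : ℝ) ^ α ∂P) + ∑ i ∈ Finset.range (k + 1), ∫ x, excess i x ∂μ := by
        rw [integral_add hmin_int (integrable_finsetSum _ fun i _ => hexcess_int i),
          integral_finsetSum _ fun i _ => hexcess_int i]
        simp_rw [hexcess_integral]
    _ ≤ (∫ ω, ((min (N ω) k : ℕ) : ℝ) ^ α ∂P) + ∑' i, ∫ x, excess i x ∂μ := by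
        gcongr
        exact hsum.sum_le_tsum _ fun i _ => integral_nonneg fun x => le_max_right _ _

end

theorem stmt5_general {Ω : Type*} [MeasurableSpace Ω] (P : Measure Ω) [IsProbabilityMeasure P]
    (ξ : ℕ → Ω → ℝ) (hmeas : ∀ j, Measurable (ξ j))
    (hlaw : ∀ j, P.map (ξ j) = gaussianReal 0 1)
    (α q : ℝ) (hα : 0 < α) (hq : 0 < q) :
    ∃ C : ℝ, ∀ N : Ω → ℕ, Measurable N → ∀ k : ℕ,
      ∫ ω, |ξ (min (N ω) k) ω| ^ q ∂P ≤ (∫ ω, ((min (N ω) k : ℕ) : ℝ) ^ α ∂P) + C := by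
  have hsum : Summable fun i : ℕ => ∫ x, max (|x| ^ q - (i : ℝ) ^ α) 0 ∂gaussianReal 0 1 := by
    refine summable_integral_max_sub_natCast_rpow _ (fun x => by positivity) hα ?_
    simpa [← Real.rpow_mul (abs_nonneg _)] using
      integrable_abs_rpow_gaussianReal (t := q * (1 + 2 / α)) (by positivity)
  exact ⟨_, fun N hN k => integral_abs_rpow_comp_min_le hmeas hlaw hα.le
    (integrable_abs_rpow_gaussianReal hq.le) hsum hN k⟩

/-- For an i.i.d. standard Gaussian sequence `(ξ_j)`, for every `α > 0` and `q > 0` there is a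
constant `C` (depending only on `α` and `q`) such that for every `ℕ`-valued random variable `N`
and every `k`, `E|ξ_{N∧k}|^q ≤ E[(N∧k)^α] + C`. -/
theorem stmt5 {Ω : Type*} [MeasurableSpace Ω] (P : Measure Ω) [IsProbabilityMeasure P]
    (ξ : ℕ → Ω → ℝ) (hmeas : ∀ j, Measurable (ξ j))
    (hlaw : ∀ j, P.map (ξ j) = gaussianReal 0 1)
    (hindep : iIndepFun ξ P)
    (α q : ℝ) (hα : 0 < α) (hq : 0 < q) :
    ∃ C : ℝ, ∀ N : Ω → ℕ, Measurable N → ∀ k : ℕ,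
      ∫ ω, |ξ (min (N ω) k) ω| ^ q ∂P ≤ (∫ ω, ((min (N ω) k : ℕ) : ℝ) ^ α ∂P) + C :=
  stmt5_general P ξ hmeas hlaw α q hα hq
end

section
/- Let p ∈ [1/2, 1). For all real numbers x > 0, a > 0 and b such that x·a + x^p·b > 0, one has x^{3p}/(x a + x^p b)^{2p+1} ≤ (2^{2p−1}/a^{2p}) · ( 1/(x^{1−p} a + b) + |b|^{2p}/(x^{1−p} a + b)^{2p+1} ). -/
open Real

lemma aux_pow2 {u v : ℝ} (hu : 0 ≤ u) (hv : 0 ≤ v) {q : ℝ} (hq : 1 ≤ q) :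
    (u + v) ^ q ≤ 2 ^ (q - 1) * (u ^ q + v ^ q) := by
  lift u to NNReal using hu
  lift v to NNReal using hv
  have := NNReal.rpow_add_le_mul_rpow_add_rpow u v hq
  exact_mod_cast this

/-- The elementary inequality: for `p ∈ [1/2,1)`, `x > 0`, `a > 0` and `b` with
`x·a + x^p·b > 0`,
`x^{3p}/(xa + x^p b)^{2p+1} ≤ (2^{2p−1}/a^{2p}) (1/(x^{1−p}a + b) + |b|^{2p}/(x^{1−p}a + b)^{2p+1})`. -/
theorem stmt8 (p : ℝ) (hp : 1 / 2 ≤ p) (hp1 : p < 1)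
    (x a b : ℝ) (hx : 0 < x) (ha : 0 < a) (h : 0 < x * a + x ^ p * b) :
    x ^ (3 * p) / (x * a + x ^ p * b) ^ (2 * p + 1) ≤
      2 ^ (2 * p - 1) / a ^ (2 * p) *
        (1 / (x ^ (1 - p) * a + b) + |b| ^ (2 * p) / (x ^ (1 - p) * a + b) ^ (2 * p + 1)) := by
  set t := x ^ (1 - p) with ht
  set y := t * a + b with hydef
  have hxp : 0 < x ^ p := Real.rpow_pos_of_pos hx p
  have htpos : 0 < t := Real.rpow_pos_of_pos hx _
  have hxsplit : x ^ p * t = x := by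
    rw [ht, ← Real.rpow_add hx]; simp
  have hsum : x * a + x ^ p * b = x ^ p * y := by
    rw [hydef, mul_add, ← mul_assoc, hxsplit]
  have hy : 0 < y := by
    rw [hsum] at h
    by_contra hc
    push_neg at hc
    nlinarith
  have hq1 : (1 : ℝ) ≤ 2 * p := by linarith
  -- rewrite LHS
  have hLHS : x ^ (3 * p) / (x * a + x ^ p * b) ^ (2 * p + 1)
      = t ^ (2 * p) / y ^ (2 * p + 1) := by
    rw [hsum, Real.mul_rpow hxp.le hy.le, ← Real.rpow_mul hx.le]
    rw [div_eq_div_iff (by positivity) (by positivity)]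
    rw [ht, ← Real.rpow_mul hx.le]
    have hcomb : x ^ ((1 - p) * (2 * p)) * x ^ (p * (2 * p + 1)) = x ^ (3 * p) := by
      rw [← Real.rpow_add hx]; ring_nf
    rw [← mul_assoc, hcomb]
  rw [hLHS]
  -- key inequality
  have hab : t * a = y - b := by rw [hydef]; ring
  have key : t ^ (2 * p) * a ^ (2 * p) ≤ 2 ^ (2 * p - 1) * (y ^ (2 * p) + |b| ^ (2 * p)) := by
    rw [← Real.mul_rpow htpos.le ha.le, hab]
    calc (y - b) ^ (2 * p) ≤ (y + |b|) ^ (2 * p) := by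
          apply Real.rpow_le_rpow (by rw [← hab]; positivity) _ (by linarith)
          have := neg_abs_le b
          linarith
      _ ≤ 2 ^ (2 * p - 1) * (y ^ (2 * p) + |b| ^ (2 * p)) :=
          aux_pow2 hy.le (abs_nonneg b) hq1
  -- finish
  have hRHS : 2 ^ (2 * p - 1) / a ^ (2 * p) * (1 / y + |b| ^ (2 * p) / y ^ (2 * p + 1))
      = 2 ^ (2 * p - 1) * (y ^ (2 * p) + |b| ^ (2 * p)) / a ^ (2 * p) / y ^ (2 * p + 1) := by
    have h1 : y ^ (2 * p + 1) = y ^ (2 * p) * y := by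
      rw [Real.rpow_add hy, Real.rpow_one]
    rw [h1]
    have h2 : (0:ℝ) < y ^ (2*p) := Real.rpow_pos_of_pos hy _
    have h3 : (0:ℝ) < a ^ (2*p) := Real.rpow_pos_of_pos ha _
    field_simp
    try ring
  rw [hRHS]
  rw [div_le_div_iff_of_pos_right (Real.rpow_pos_of_pos hy _)]
  rw [le_div_iff₀ (Real.rpow_pos_of_pos ha _)]
  exact key
end

section
/- Let S be a metric space, let (μ_n) and μ be Borel probability measures on S with μ_n → μ weakly, let (S',ρ) be a separable metric space, and let φ : S → S' be a Borel measurable map whose set of discontinuity points is a μ-null set. Then the pushforward measures μ_n ∘ φ⁻¹ converge weakly to μ ∘ φ⁻¹ on S'. -/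
open MeasureTheory Filter Topology

/-!
For a closed set `F`, every point of `closure (φ ⁻¹' F)` at which `φ` is continuous lies in
`φ ⁻¹' F`; as `φ` is continuous `μ`-a.e., `μ (closure (φ ⁻¹' F)) = μ (φ ⁻¹' F)`. The portmanteau
theorem then gives `limsup μₙ (φ ⁻¹' F) ≤ limsup μₙ (closure (φ ⁻¹' F)) ≤ μ (φ ⁻¹' F)` for every
closed `F`, which is the closed-set criterion for the weak convergence of the push-forwards.
-/

theorem ContinuousAt.mem_of_mem_closure_preimage {X Y : Type*} [TopologicalSpace X]
    [TopologicalSpace Y] {f : X → Y} {x : X} {F : Set Y} (hf : ContinuousAt f x)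
    (hF : IsClosed F) (hx : x ∈ closure (f ⁻¹' F)) : f x ∈ F :=
  hF.closure_subset (hf.continuousWithinAt.mem_closure hx (Set.mapsTo_preimage f F))

namespace MeasureTheory.ProbabilityMeasure

variable {Ω Ω' ι : Type*} [MeasurableSpace Ω] [TopologicalSpace Ω] [OpensMeasurableSpace Ω]
  [HasOuterApproxClosed Ω] [TopologicalSpace Ω'] {L : Filter ι}

theorem limsup_measure_preimage_closed_le_of_tendsto_of_ae_continuousAt
    {νs : ι → ProbabilityMeasure Ω} {ν : ProbabilityMeasure Ω} (lim : Tendsto νs L (𝓝 ν))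
    {f : Ω → Ω'} (hf_cont : ∀ᵐ x ∂(ν : Measure Ω), ContinuousAt f x)
    {F : Set Ω'} (hF : IsClosed F) :
    L.limsup (fun i ↦ (νs i : Measure Ω) (f ⁻¹' F)) ≤ (ν : Measure Ω) (f ⁻¹' F) := by
  have closure_ae_le : closure (f ⁻¹' F) ≤ᵐ[(ν : Measure Ω)] f ⁻¹' F :=
    hf_cont.mono fun x hx hmem ↦ hx.mem_of_mem_closure_preimage hF hmem
  calc L.limsup (fun i ↦ (νs i : Measure Ω) (f ⁻¹' F))
      ≤ L.limsup (fun i ↦ (νs i : Measure Ω) (closure (f ⁻¹' F))) :=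
        limsup_le_limsup (.of_forall fun _ ↦ measure_mono subset_closure)
    _ ≤ (ν : Measure Ω) (closure (f ⁻¹' F)) :=
        limsup_measure_closed_le_of_tendsto lim isClosed_closure
    _ ≤ (ν : Measure Ω) (f ⁻¹' F) := measure_mono_ae closure_ae_le

theorem tendsto_map_of_tendsto_of_ae_continuousAt [MeasurableSpace Ω'] [OpensMeasurableSpace Ω']
    [L.IsCountablyGenerated]
    {νs : ι → ProbabilityMeasure Ω} {ν : ProbabilityMeasure Ω} (lim : Tendsto νs L (𝓝 ν))
    {f : Ω → Ω'} (hf : Measurable f) (hf_cont : ∀ᵐ x ∂(ν : Measure Ω), ContinuousAt f x) :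
    Tendsto (fun i ↦ (νs i).map hf.aemeasurable) L (𝓝 (ν.map hf.aemeasurable)) := by
  refine tendsto_of_forall_isClosed_limsup_le' fun F hF ↦ ?_
  simp only [map_apply' _ _ hF.measurableSet]
  exact limsup_measure_preimage_closed_le_of_tendsto_of_ae_continuousAt lim hf_cont hF

end MeasureTheory.ProbabilityMeasure

theorem stmt15_general {S : Type*} [MetricSpace S] [MeasurableSpace S] [BorelSpace S]
    {S' : Type*} [MetricSpace S']
    [MeasurableSpace S'] [BorelSpace S']
    (μn : ℕ → Measure S) (μ : Measure S)
    [∀ n, IsProbabilityMeasure (μn n)] [IsProbabilityMeasure μ]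
    (hweak : ∀ h : BoundedContinuousFunction S ℝ,
      Tendsto (fun n => ∫ x, h x ∂(μn n)) atTop (𝓝 (∫ x, h x ∂μ)))
    (φ : S → S') (hφm : Measurable φ)
    (hdisc : μ {x | ¬ ContinuousAt φ x} = 0) :
    ∀ h : BoundedContinuousFunction S' ℝ,
      Tendsto (fun n => ∫ y, h y ∂((μn n).map φ)) atTop
        (𝓝 (∫ y, h y ∂(μ.map φ))) := by
  let ν : ProbabilityMeasure S := ⟨μ, inferInstance⟩
  let νs : ℕ → ProbabilityMeasure S := fun n ↦ ⟨μn n, inferInstance⟩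
  have lim : Tendsto νs atTop (𝓝 ν) :=
    ProbabilityMeasure.tendsto_iff_forall_integral_tendsto.mpr hweak
  exact ProbabilityMeasure.tendsto_iff_forall_integral_tendsto.mp
    (ProbabilityMeasure.tendsto_map_of_tendsto_of_ae_continuousAt lim hφm (ae_iff.mpr hdisc))

/-- Continuous mapping theorem: if `μ_n → μ` weakly on a metric space `S` and
`φ : S → S'` is Borel measurable with a `μ`-null set of discontinuity points, then
`μ_n ∘ φ⁻¹ → μ ∘ φ⁻¹` weakly on the separable metric space `S'`. -/
theorem stmt15 {S : Type*} [MetricSpace S] [MeasurableSpace S] [BorelSpace S]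
    {S' : Type*} [MetricSpace S'] [TopologicalSpace.SeparableSpace S']
    [MeasurableSpace S'] [BorelSpace S']
    (μn : ℕ → Measure S) (μ : Measure S)
    [∀ n, IsProbabilityMeasure (μn n)] [IsProbabilityMeasure μ]
    (hweak : ∀ h : BoundedContinuousFunction S ℝ,
      Tendsto (fun n => ∫ x, h x ∂(μn n)) atTop (𝓝 (∫ x, h x ∂μ)))
    (φ : S → S') (hφm : Measurable φ)
    (hdisc : μ {x | ¬ ContinuousAt φ x} = 0) :
    ∀ h : BoundedContinuousFunction S' ℝ,
      Tendsto (fun n => ∫ y, h y ∂((μn n).map φ)) atTop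
        (𝓝 (∫ y, h y ∂(μ.map φ))) :=
  stmt15_general μn μ hweak φ hφm hdisc
end
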